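/- arXiv:2311.04508 — 6 statements merged into one kernel-verified Lean document; each statement's English description precedes it below -/
import Mathlib

section
/- Let f and g be entire functions on ℂ, and suppose g is a polynomial of degree m. Then there exists a polynomial p of degree less than m and an entire function h such that f(z) = p(z) + h(z)·g(z) for all z ∈ ℂ. -/
/-!
Induct on `m`. For `m = 0` the divisor is a nonzero constant. Otherwise `G` has a root `a`, so
`G = (X - a) G₁` with `deg G₁ = m - 1`; writing `f(z) = f(a) + (z - a) q(z)` with
`q = dslope f a`, which is entire by the removable singularity theorem, and dividing `q` by `G₁`
gives `f = (f(a) + (X - a) p₁) + h G`.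
-/

open Polynomial

theorem Differentiable.dslope {E : Type*} [NormedAddCommGroup E] [NormedSpace ℂ E]
    [CompleteSpace E] {f : ℂ → E} (hf : Differentiable ℂ f) (a : ℂ) :
    Differentiable ℂ (dslope f a) := by
  rw [← differentiableOn_univ]
  exact (Complex.differentiableOn_dslope Filter.univ_mem).2 hf.differentiableOn

theorem eq_add_sub_mul_dslope (f : ℂ → ℂ) (a z : ℂ) : f z = f a + (z - a) * dslope f a z := by
  rw [← smul_eq_mul, sub_smul_dslope, add_sub_cancel]

theorem degree_C_add_X_sub_C_mul_lt {R : Type*} [CommRing R] [IsDomain R] {p : R[X]} {n : ℕ}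
    (hp : p.degree < n) (a c : R) : (C c + (X - C a) * p).degree < ↑(n + 1) := by
  refine (degree_add_le _ _).trans_lt (max_lt ?_ ?_)
  · exact degree_C_le.trans_lt (by exact_mod_cast n.succ_pos)
  · rw [degree_mul, degree_X_sub_C, add_comm]
    push_cast
    exact WithBot.add_lt_add_right (by simp) hp

theorem degree_eq_of_degree_X_sub_C_mul_eq {R : Type*} [CommRing R] [IsDomain R] {p : R[X]}
    {a : R} {n : ℕ} (h : ((X - C a) * p).degree = ↑(n + 1)) : p.degree = n := by
  rw [degree_mul, degree_X_sub_C, add_comm] at h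
  push_cast at h
  exact WithBot.add_right_cancel (by simp) h

def HasEntireDivision (G : ℂ[X]) (m : ℕ) : Prop :=
  ∀ f : ℂ → ℂ, Differentiable ℂ f → ∃ (p : ℂ[X]) (h : ℂ → ℂ),
    p.degree < m ∧ Differentiable ℂ h ∧ ∀ z, f z = p.eval z + h z * G.eval z

theorem hasEntireDivision_C {c : ℂ} (hc : c ≠ 0) : HasEntireDivision (C c) 0 := fun f hf =>
  ⟨0, fun z => f z / c, by simp, hf.div_const c, fun z => by simp [hc]⟩

theorem HasEntireDivision.X_sub_C_mul {G : ℂ[X]} {n : ℕ} (hG : HasEntireDivision G n) (a : ℂ) :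
    HasEntireDivision ((X - C a) * G) (n + 1) := by
  intro f hf
  obtain ⟨p, h, hp, hh, hq⟩ := hG (dslope f a) (hf.dslope a)
  refine ⟨C (f a) + (X - C a) * p, h, degree_C_add_X_sub_C_mul_lt hp a (f a), hh, fun z => ?_⟩
  rw [eq_add_sub_mul_dslope f a z, hq z]
  simp only [eval_add, eval_mul, eval_sub, eval_X, eval_C]
  ring

theorem hasEntireDivision_of_degree_eq {G : ℂ[X]} {m : ℕ} (hG : G.degree = m) :
    HasEntireDivision G m := by
  induction m generalizing G with
  | zero =>
    have hG₀ : G = C (G.coeff 0) := eq_C_of_degree_eq_zero hG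
    have hc : G.coeff 0 ≠ 0 := fun h0 => by rw [h0, C_0] at hG₀; simp [hG₀] at hG
    rw [hG₀]
    exact hasEntireDivision_C hc
  | succ n ih =>
    obtain ⟨a, ha⟩ := Complex.exists_root (by rw [hG]; exact_mod_cast n.succ_pos)
    have hfactor : (X - C a) * (G /ₘ (X - C a)) = G := mul_divByMonic_eq_iff_isRoot.2 ha
    rw [← hfactor] at hG ⊢
    exact (ih (degree_eq_of_degree_X_sub_C_mul_eq hG)).X_sub_C_mul a

/-- Division with remainder of an entire function by a polynomial of degree `m`:
there is a polynomial remainder of degree `< m` and an entire quotient. -/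
theorem entire_division_by_polynomial
    (f : ℂ → ℂ) (hf : Differentiable ℂ f)
    (m : ℕ) (G : Polynomial ℂ) (hG : G.degree = (m : WithBot ℕ)) :
    ∃ (p : Polynomial ℂ) (h : ℂ → ℂ),
      p.degree < (m : WithBot ℕ) ∧ Differentiable ℂ h ∧
      ∀ z : ℂ, f z = p.eval z + h z * G.eval z :=
  hasEntireDivision_of_degree_eq hG f hf
end

section
/- Let f and g be entire functions on ℂ with no common zero. Then there exist entire functions f̃ and g̃ such that f(z)·f̃(z) + g(z)·g̃(z) = 1 for all z ∈ ℂ. -/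
/-!
The zeros of `g` form a closed discrete set `S`, at each point of which `(f g)⁻¹` is meromorphic.
By Mittag-Leffler there is a function `P`, holomorphic off `S`, such that `P - (f g)⁻¹` is bounded
near every point of `S`: sum the principal parts of `(f g)⁻¹` at the points `a ∈ S`, each minus a
Taylor polynomial at `0` that brings it below `2⁻ⁿ⁽ᵃ⁾` on the disc `‖z‖ < ‖a‖ / 2`, so that the
series converges locally uniformly off `S`. Near `a ∈ S`, `g P = g (P - (f g)⁻¹) + f⁻¹` and
`g⁻¹ - f P = -f (P - (f g)⁻¹)` are bounded, so by Riemann's removable singularity theorem they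
extend to entire functions `f̃`, `g̃`; off `S` one has `f (g P) + g (g⁻¹ - f P) = 1`, and this
persists on `S` by continuity.
-/

open Filter Metric Set Asymptotics
open scoped Topology NNReal

theorem FormalMultilinearSeries.differentiable_partialSum {𝕜 E F : Type*}
    [NontriviallyNormedField 𝕜] [NormedAddCommGroup E] [NormedSpace 𝕜 E]
    [NormedAddCommGroup F] [NormedSpace 𝕜 F] (p : FormalMultilinearSeries 𝕜 E F) (n : ℕ) :
    Differentiable 𝕜 (p.partialSum n) :=
  Differentiable.fun_sum fun k _ x => ((p k).hasFDerivAt _).differentiableAt.comp x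
    (differentiableAt_pi.2 fun _ => differentiableAt_id)

theorem ContinuousAt.boundedAtFilter_nhdsNE {X β : Type*} [TopologicalSpace X]
    [SeminormedAddCommGroup β] {φ : X → β} {a : X} (h : ContinuousAt φ a) :
    BoundedAtFilter (𝓝[≠] a) φ :=
  (h.tendsto.isBigO_one ℝ).mono nhdsWithin_le_nhds

section Codiscrete

variable {X : Type*} [TopologicalSpace X] {S : Set X}

theorem compl_mem_nhdsNE_of_compl_mem_codiscrete (hS : Sᶜ ∈ codiscrete X) (x : X) :
    Sᶜ ∈ 𝓝[≠] x :=
  disjoint_principal_right.1 (by simpa using mem_codiscrete.1 hS x)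

theorem IsCompact.finite_inter_of_compl_mem_codiscrete {K : Set X} (hK : IsCompact K)
    (hS : Sᶜ ∈ codiscrete X) : (K ∩ S).Finite := by
  simpa [sdiff_eq] using
    hK.finite_sdiff_of_mem_codiscreteWithin (codiscreteWithin_mono (subset_univ K) hS)

theorem Set.Countable.of_compl_mem_codiscrete [LindelofSpace X]
    (hS : Sᶜ ∈ codiscrete X) : S.Countable :=
  have hS' := compl_mem_codiscrete_iff.1 hS
  hS'.1.isLindelof.countable_of_isDiscrete hS'.2

end Codiscrete

section Holomorphic

variable {E : Type*} [NormedAddCommGroup E] [NormedSpace ℂ E]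

theorem MeromorphicAt.exists_principalPart {h : ℂ → E} {a : ℂ} (hh : MeromorphicAt h a) :
    ∃ q : ℂ → E, DifferentiableOn ℂ q {a}ᶜ ∧ BoundedAtFilter (𝓝[≠] a) (h - q) := by
  obtain ⟨n, w, hw⟩ := hh
  refine ⟨fun z => ((z - a) ^ n)⁻¹ • w.partialSum n (z - a), fun z hz => ?_, ?_⟩
  · have hza : (z - a) ^ n ≠ 0 := pow_ne_zero n (sub_ne_zero.2 hz)
    exact (((differentiableAt_id.sub_const a).pow n).inv hza).smul
      ((w.differentiable_partialSum n).differentiableAt.comp z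
        (differentiableAt_id.sub_const a)) |>.differentiableWithinAt
  · have hTaylor : (fun z => (z - a) ^ n • h z - w.partialSum n (z - a)) =O[𝓝[≠] a]
        fun z => (z - a) ^ n := by
      have hO := (hw.isBigO_sub_partialSum_pow n).comp_tendsto
        (tendsto_sub_nhds_zero_iff.2 (tendsto_id (x := 𝓝 a)))
      have hnorm : (fun z => ‖z - a‖ ^ n) =O[𝓝 a] fun z => (z - a) ^ n := by
        simpa using (isBigO_refl (fun z => (z - a) ^ n) (𝓝 a)).norm_left
      simpa [Function.comp_def] using (hO.trans hnorm).mono nhdsWithin_le_nhds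
    have hne : ∀ᶠ z in 𝓝[≠] a, (z - a) ^ n ≠ 0 := by
      filter_upwards [self_mem_nhdsWithin] with z hz
      exact pow_ne_zero n (sub_ne_zero.2 hz)
    refine (((isBigO_refl (fun z => ((z - a) ^ n)⁻¹) _).smul hTaylor).congr' ?_ ?_).trans
      (isBigO_const_const (1 : ℂ) one_ne_zero _)
    · filter_upwards [hne] with z hz
      simp [smul_sub, inv_smul_smul₀ hz]
    · filter_upwards [hne] with z hz
      simp [hz]

variable [CompleteSpace E]

theorem DifferentiableOn.exists_differentiable_norm_sub_lt {q : ℂ → E} {c : ℂ} {r : ℝ≥0}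
    {R : ℝ} (hq : DifferentiableOn ℂ q (ball c R)) (hrR : r < R) {ε : ℝ} (hε : 0 < ε) :
    ∃ p : ℂ → E, Differentiable ℂ p ∧ ∀ z ∈ ball c r, ‖q z - p z‖ < ε := by
  set R' : ℝ≥0 := ⟨(r + R) / 2, by linarith [r.2]⟩
  have hrR' : r < R' := by rw [← NNReal.coe_lt_coe]; change (r : ℝ) < (r + R) / 2; linarith
  have hR'R : closedBall c R' ⊆ ball c R :=
    closedBall_subset_ball (by change (r + R) / 2 < R; linarith)
  have hps := (hq.mono hR'R).hasFPowerSeriesOnBall (pos_of_gt hrR')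
  obtain ⟨N, hN⟩ := (Metric.tendstoUniformlyOn_iff.1
    (hps.tendstoUniformlyOn' (ENNReal.coe_lt_coe.2 hrR')) ε hε).exists
  refine ⟨fun z => (cauchyPowerSeries q c R').partialSum N (z - c),
    (FormalMultilinearSeries.differentiable_partialSum _ N).comp (differentiable_id.sub_const c),
    fun z hz => ?_⟩
  simpa [dist_eq_norm] using hN z hz

theorem DifferentiableOn.exists_differentiable_norm_sub_le_of_two_mul_norm_lt {q : ℂ → E}
    {a : ℂ} (hq : DifferentiableOn ℂ q {a}ᶜ) {ε : ℝ} (hε : 0 < ε) :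
    ∃ p : ℂ → E, Differentiable ℂ p ∧ ∀ z, 2 * ‖z‖ < ‖a‖ → ‖q z - p z‖ ≤ ε := by
  rcases eq_or_ne a 0 with rfl | ha0
  · exact ⟨0, differentiable_const 0, fun z hz => absurd hz (by simp)⟩
  have hqa : DifferentiableOn ℂ q (ball 0 ‖a‖) :=
    hq.mono fun z hz hza => by simp [mem_singleton_iff.1 hza] at hz
  obtain ⟨p, hp, hpε⟩ := hqa.exists_differentiable_norm_sub_lt (r := ‖a‖₊ / 2)
    (by simpa using half_lt_self (norm_pos_iff.2 ha0)) hε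
  exact ⟨p, hp, fun z hz => (hpε z (by rw [mem_ball_zero_iff]; push_cast; linarith)).le⟩

namespace Complex

theorem exists_tsum_eq_sum_add_differentiableOn_ball {ι : Type*} {c : ι → ℂ}
    {t : ι → ℂ → E} {ε : ι → ℝ} (ht : ∀ i, DifferentiableOn ℂ (t i) {c i}ᶜ) (hε : Summable ε)
    (htε : ∀ i z, 2 * ‖z‖ < ‖c i‖ → ‖t i z‖ ≤ ε i) (hfin : ∀ R, {i | ‖c i‖ ≤ R}.Finite)
    (R : ℝ) :
    ∃ T : Finset ι, (∀ i, ‖c i‖ ≤ 2 * R → i ∈ T) ∧ ∃ H : ℂ → E,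
      DifferentiableOn ℂ H (ball 0 R) ∧ ∀ z ∈ ball 0 R, ∑' i, t i z = ∑ i ∈ T, t i z + H z := by
  have hsum : ∀ z, Summable fun i => t i z := fun z =>
    hε.of_norm_bounded_eventually <| eventually_cofinite.2 <| (hfin (2 * ‖z‖)).subset
      fun i hi => not_lt.1 fun hlt => hi (htε i z hlt)
  set T := (hfin (2 * R)).toFinset
  have hfar : ∀ i : ↥(T : Set ι)ᶜ, ∀ z ∈ ball (0 : ℂ) R, 2 * ‖z‖ < ‖c i‖ := by
    rintro ⟨i, hi⟩ z hz
    simp only [T, mem_compl_iff, Finset.mem_coe, Set.Finite.mem_toFinset, mem_ofPred_eq,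
      not_le] at hi
    rw [mem_ball_zero_iff] at hz
    linarith
  refine ⟨T, fun i hi => by simpa [T] using hi, fun z => ∑' i : ↥(T : Set ι)ᶜ, t i z,
    differentiableOn_tsum_of_summable_norm (hε.subtype _) (fun i => (ht i).mono ?_)
      isOpen_ball fun i z hz => htε i z (hfar i z hz),
    fun z _ => ((hsum z).sum_add_tsum_compl).symm⟩
  intro z hz hzi
  have := hfar i z hz
  rw [mem_singleton_iff.1 hzi] at this
  linarith [norm_nonneg (c i)]

theorem exists_mittagLeffler {S : Set ℂ} (hS : Sᶜ ∈ codiscrete ℂ)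
    {q : ℂ → ℂ → E} (hq : ∀ a ∈ S, DifferentiableOn ℂ (q a) {a}ᶜ) :
    ∃ P : ℂ → E, (∀ z ∉ S, DifferentiableAt ℂ P z) ∧
      ∀ a ∈ S, BoundedAtFilter (𝓝[≠] a) (P - q a) := by
  have : Countable S := (Set.Countable.of_compl_mem_codiscrete hS).to_subtype
  obtain ⟨e, he⟩ := exists_injective_nat S
  set ε : S → ℝ := fun a => (1 / 2) ^ e a
  have hε : Summable ε := summable_geometric_two.comp_injective he
  have happrox : ∀ a : S, ∃ p : ℂ → E, Differentiable ℂ p ∧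
      ∀ z, 2 * ‖z‖ < ‖(a : ℂ)‖ → ‖q a z - p z‖ ≤ ε a := fun a =>
    (hq a a.2).exists_differentiable_norm_sub_le_of_two_mul_norm_lt (pow_pos (by norm_num) _)
  choose p hp hpε using happrox
  have hfin : ∀ R, {a : S | ‖(a : ℂ)‖ ≤ R}.Finite := fun R =>
    ((isCompact_closedBall 0 R).finite_inter_of_compl_mem_codiscrete hS).preimage
      Subtype.val_injective.injOn |>.subset fun a ha => ⟨by simpa using ha, a.2⟩
  have ht : ∀ a : S, DifferentiableOn ℂ (q a - p a) {(a : ℂ)}ᶜ := fun a =>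
    (hq a a.2).sub (hp a).differentiableOn
  have hdecomp := exists_tsum_eq_sum_add_differentiableOn_ball ht hε hpε hfin
  refine ⟨fun z => ∑' a : S, (q a - p a) z, fun z hz => ?_, fun a ha => ?_⟩
  · obtain ⟨T, -, H, hH, hPH⟩ := hdecomp (‖z‖ + 1)
    have hball : ball (0 : ℂ) (‖z‖ + 1) ∈ 𝓝 z := isOpen_ball.mem_nhds (by simp)
    refine (DifferentiableAt.add (DifferentiableAt.fun_sum fun b _ => ?_)
      (hH.differentiableAt hball)).congr_of_eventuallyEq (eventuallyEq_of_mem hball hPH)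
    exact (ht b).differentiableAt (isOpen_compl_singleton.mem_nhds fun hzb => hz (hzb ▸ b.2))
  · obtain ⟨T, hT, H, hH, hPH⟩ := hdecomp (‖a‖ + 1)
    have haT : ⟨a, ha⟩ ∈ T := hT _ (by linarith [norm_nonneg a])
    have hball : ball (0 : ℂ) (‖a‖ + 1) ∈ 𝓝 a := isOpen_ball.mem_nhds (by simp)
    have hdiff : DifferentiableAt ℂ
        (fun z => ∑ b ∈ T.erase ⟨a, ha⟩, (q b - p b) z - p ⟨a, ha⟩ z + H z) a := by
      refine ((DifferentiableAt.fun_sum fun b hb => ?_).sub (hp _).differentiableAt).add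
        (hH.differentiableAt hball)
      refine (ht b).differentiableAt (isOpen_compl_singleton.mem_nhds ?_)
      exact fun hab => Finset.ne_of_mem_erase hb (Subtype.ext hab.symm)
    refine hdiff.continuousAt.boundedAtFilter_nhdsNE.congr' ?_ EventuallyEq.rfl
    filter_upwards [nhdsWithin_le_nhds hball] with z hz
    rw [Pi.sub_apply, hPH z hz, ← Finset.add_sum_erase T _ haT]
    simp only [Pi.sub_apply]
    abel

theorem exists_sub_boundedAtFilter_of_meromorphicAt {S : Set ℂ} (hS : Sᶜ ∈ codiscrete ℂ)
    {h : ℂ → E} (hh : ∀ a ∈ S, MeromorphicAt h a) :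
    ∃ P : ℂ → E, (∀ z ∉ S, DifferentiableAt ℂ P z) ∧
      ∀ a ∈ S, BoundedAtFilter (𝓝[≠] a) (P - h) := by
  choose! q hq hqh using fun a ha => (hh a ha).exists_principalPart
  obtain ⟨P, hP, hPq⟩ := exists_mittagLeffler hS hq
  exact ⟨P, hP, fun a ha => (hPq a ha).sub (hqh a ha) |>.congr_left fun z => by simp⟩

theorem exists_differentiable_eqOn_compl_of_boundedAtFilter {S : Set ℂ}
    (hS : Sᶜ ∈ codiscrete ℂ) {F : ℂ → E}
    (hF : ∀ z ∉ S, DifferentiableAt ℂ F z) (hb : ∀ a ∈ S, BoundedAtFilter (𝓝[≠] a) F) :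
    ∃ G : ℂ → E, Differentiable ℂ G ∧ EqOn G F Sᶜ := by
  classical
  set G : ℂ → E := fun z => if z ∈ S then limUnder (𝓝[≠] z) F else F z
  have hGF : EqOn G F Sᶜ := fun z hz => if_neg hz
  have hdiff : ∀ z ∉ S, DifferentiableAt ℂ G z := fun z hz =>
    (hF z hz).congr_of_eventuallyEq <| eventuallyEq_of_mem
      ((compl_mem_codiscrete_iff.1 hS).1.isOpen_compl.mem_nhds hz) hGF
  refine ⟨G, fun a => ?_, hGF⟩
  by_cases ha : a ∈ S
  · have hnear : ∀ᶠ z in 𝓝[≠] a, z ∉ S := compl_mem_nhdsNE_of_compl_mem_codiscrete hS a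
    have hlim : Tendsto F (𝓝[≠] a) (𝓝 (G a)) := by
      simp only [G, if_pos ha]
      refine tendsto_limUnder_of_differentiable_on_punctured_nhds_of_bounded_under
        (hnear.mono hF) ((isBigO_one_iff ℝ).1 ?_)
      exact (hb a ha).sub (isBigO_const_const (F a) one_ne_zero _)
    refine (analyticAt_of_differentiable_on_punctured_nhds_of_continuousAt
      (hnear.mono hdiff) ?_).differentiableAt
    exact continuousWithinAt_compl_self.1 (hlim.congr' (eventuallyEq_of_mem hnear hGF).symm)
  · exact hdiff a ha

end Complex

end Holomorphic

section BezoutTerms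

variable {X 𝕜 : Type*} [TopologicalSpace X] [NormedField 𝕜] {f g P : X → 𝕜} {a : X}

theorem boundedAtFilter_mul_of_sub_inv_mul (hf : ContinuousAt f a) (hfa : f a ≠ 0)
    (hg : ContinuousAt g a) (hg0 : ∀ᶠ z in 𝓝[≠] a, g z ≠ 0)
    (hP : BoundedAtFilter (𝓝[≠] a) (P - (f * g)⁻¹)) : BoundedAtFilter (𝓝[≠] a) (g * P) :=
  (hg.boundedAtFilter_nhdsNE.mul hP).add (hf.inv₀ hfa).boundedAtFilter_nhdsNE |>.congr' (by
    filter_upwards [hg0] with z hz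
    simp only [mul_inv_rev, Pi.add_apply, Pi.mul_apply, Pi.sub_apply, Pi.inv_apply]
    field_simp
    ring) EventuallyEq.rfl

theorem boundedAtFilter_inv_sub_mul_of_sub_inv_mul (hf : ContinuousAt f a) (hfa : f a ≠ 0)
    (hP : BoundedAtFilter (𝓝[≠] a) (P - (f * g)⁻¹)) :
    BoundedAtFilter (𝓝[≠] a) (g⁻¹ - f * P) :=
  (hf.boundedAtFilter_nhdsNE.mul hP).neg.congr' (by
    filter_upwards [nhdsWithin_le_nhds (hf.eventually_ne hfa)] with z hz
    simp only [mul_inv_rev, Pi.neg_apply, Pi.mul_apply, Pi.sub_apply, Pi.inv_apply]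
    field_simp
    ring) EventuallyEq.rfl

end BezoutTerms

/-- Bézout identity for entire functions with no common zero. -/
theorem entire_bezout (f g : ℂ → ℂ)
    (hf : Differentiable ℂ f) (hg : Differentiable ℂ g)
    (hnocommon : ∀ z : ℂ, f z ≠ 0 ∨ g z ≠ 0) :
    ∃ ft gt : ℂ → ℂ, Differentiable ℂ ft ∧ Differentiable ℂ gt ∧
      ∀ z : ℂ, f z * ft z + g z * gt z = 1 := by
  by_cases hg0 : ∀ z, g z = 0
  · have hf0 : ∀ z, f z ≠ 0 := fun z => (hnocommon z).resolve_right (not_not.2 (hg0 z))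
    exact ⟨f⁻¹, 0, hf.inv hf0, differentiable_const 0, fun z => by simp [hf0 z]⟩
  obtain ⟨z₀, hz₀⟩ := not_forall.1 hg0
  set S := g ⁻¹' {0}
  have hS : Sᶜ ∈ codiscrete ℂ :=
    AnalyticOnNhd.preimage_zero_mem_codiscrete (fun z _ => hg.analyticAt z) hz₀
  have hnear : ∀ z, ∀ᶠ w in 𝓝[≠] z, g w ≠ 0 := compl_mem_nhdsNE_of_compl_mem_codiscrete hS
  have hfS : ∀ a ∈ S, f a ≠ 0 := fun a ha => (hnocommon a).resolve_right (not_not.2 ha)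
  obtain ⟨P, hP, hPb⟩ := Complex.exists_sub_boundedAtFilter_of_meromorphicAt hS
    (h := (f * g)⁻¹) fun a _ => ((hf.analyticAt a).mul (hg.analyticAt a)).meromorphicAt.inv
  obtain ⟨ft, hft, hftP⟩ := Complex.exists_differentiable_eqOn_compl_of_boundedAtFilter hS
    (fun z hz => hg.differentiableAt.mul (hP z hz)) fun a ha =>
      boundedAtFilter_mul_of_sub_inv_mul hf.continuous.continuousAt (hfS a ha)
        hg.continuous.continuousAt (hnear a) (hPb a ha)
  obtain ⟨gt, hgt, hgtP⟩ := Complex.exists_differentiable_eqOn_compl_of_boundedAtFilter hS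
    (fun z hz => (hg.differentiableAt.inv hz).sub (hf.differentiableAt.mul (hP z hz)))
    fun a ha => boundedAtFilter_inv_sub_mul_of_sub_inv_mul hf.continuous.continuousAt
      (hfS a ha) (hPb a ha)
  refine ⟨ft, gt, hft, hgt, fun z => ?_⟩
  have hone : (fun w => f w * ft w + g w * gt w) =ᶠ[𝓝[≠] z] fun _ => 1 := by
    filter_upwards [hnear z] with w hw
    rw [hftP hw, hgtP hw]
    simp only [Pi.mul_apply, Pi.sub_apply, Pi.inv_apply]
    field_simp
    ring
  have hcont : ContinuousAt (fun w => f w * ft w + g w * gt w) z :=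
    ((hf.mul hft).add (hg.mul hgt)).continuous.continuousAt
  exact ((hcont.eventuallyEq_nhds_iff_eventuallyEq_nhdsNE continuousAt_const).1 hone).eq_of_nhds
end

section
/- Let Z be a k×k complex matrix and Ψ an n×k complex matrix. The following conditions are equivalent: (1) for every X ∈ gl(k,ℂ), if Ψ·X = 0 and [Z,X] = 0 then X = 0; (2) for every column vector v ∈ ℂᵏ, if Ψ·Zᵃ·v = 0 for all a = 0,1,…,k−1 then v = 0. -/
private lemma aux_sum_mulVec {α ι m' n' : Type*} [NonUnitalNonAssocSemiring α] [Fintype n']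
    (s : Finset ι) (f : ι → Matrix m' n' α) (v : n' → α) :
    (∑ i ∈ s, f i).mulVec v = ∑ i ∈ s, (f i).mulVec v := by
  ext j
  simp only [Matrix.mulVec, dotProduct, Matrix.sum_apply, Finset.sum_mul,
    Finset.sum_apply]
  rw [Finset.sum_comm]

open Polynomial in
/-- Two equivalent formulations of the `GL(k,ℂ)`-free condition on half-ADHM data
`(Z, Ψ)`. -/
theorem glk_free_iff (k n : ℕ)
    (Z : Matrix (Fin k) (Fin k) ℂ) (Ψ : Matrix (Fin n) (Fin k) ℂ) :
    (∀ X : Matrix (Fin k) (Fin k) ℂ, Ψ * X = 0 → Z * X - X * Z = 0 → X = 0) ↔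
    (∀ v : Fin k → ℂ, (∀ a : ℕ, a < k → (Ψ * Z ^ a).mulVec v = 0) → v = 0) := by
  classical
  constructor
  · intro h v hv
    by_contra hv0
    -- minimal degree annihilating polynomial
    have hex : ∃ d : ℕ, ∃ p : ℂ[X], p ≠ 0 ∧ p.natDegree ≤ d ∧
        ((Polynomial.aeval Z) p).mulVec v = 0 := by
      refine ⟨k, Z.charpoly, Z.charpoly_monic.ne_zero, ?_, ?_⟩
      · simp [Matrix.charpoly_natDegree_eq_dim]
      · simp [Matrix.aeval_self_charpoly]
    obtain ⟨m, hm0, hmd, hmv⟩ := Nat.find_spec hex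
    set d0 := Nat.find hex with hd0
    have hd0k : d0 ≤ k := by
      apply Nat.find_min' hex
      refine ⟨Z.charpoly, Z.charpoly_monic.ne_zero, ?_, ?_⟩
      · simp [Matrix.charpoly_natDegree_eq_dim]
      · simp [Matrix.aeval_self_charpoly]
    have hdm : m.natDegree ≠ 0 := by
      intro h0
      obtain ⟨c, hc⟩ := Polynomial.natDegree_eq_zero.mp h0
      have hc0 : c ≠ 0 := by
        intro h'; apply hm0; rw [← hc, h', map_zero]
      apply hv0
      have : ((Polynomial.aeval Z) (Polynomial.C c)).mulVec v = 0 := by rw [hc]; exact hmv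
      rw [Polynomial.aeval_C, Algebra.algebraMap_eq_smul_one] at this
      have h2 : c • v = 0 := by
        simpa [Matrix.smul_mulVec, Matrix.one_mulVec] using this
      have := congrArg (fun w => c⁻¹ • w) h2
      simpa [smul_smul, inv_mul_cancel₀ hc0] using this
    -- root of m
    obtain ⟨lam, hroot⟩ := Complex.exists_root
      (Polynomial.natDegree_pos_iff_degree_pos.mp (Nat.pos_of_ne_zero hdm))
    obtain ⟨q, hq⟩ := Polynomial.dvd_iff_isRoot.mpr hroot
    have hq0 : q ≠ 0 := by rintro rfl; simp at hq; exact hm0 hq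
    have hdegm : m.natDegree = 1 + q.natDegree := by
      rw [hq, Polynomial.natDegree_mul (Polynomial.X_sub_C_ne_zero lam) hq0,
        Polynomial.natDegree_X_sub_C]
    have hqlt : q.natDegree < d0 := by omega
    set w : Fin k → ℂ := ((Polynomial.aeval Z) q).mulVec v with hwdef
    have hw0 : w ≠ 0 := by
      intro h'
      exact Nat.find_min hex hqlt ⟨q, hq0, le_rfl, h'⟩
    -- eigenvector equation
    have haevalm : (Polynomial.aeval Z) m = (Z - lam • 1) * (Polynomial.aeval Z) q := by
      rw [hq, map_mul]
      congr 1
      simp [Algebra.algebraMap_eq_smul_one]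
    have heig : Z.mulVec w = lam • w := by
      have h1 : (Z - lam • 1).mulVec w = 0 := by
        rw [hwdef, Matrix.mulVec_mulVec, ← haevalm, hmv]
      have h2 : (Z - lam • 1).mulVec w = Z.mulVec w - lam • w := by
        rw [Matrix.sub_mulVec, Matrix.smul_mulVec, Matrix.one_mulVec]
      rw [h2, sub_eq_zero] at h1
      exact h1
    -- Ψ kills w
    have hΨw : Ψ.mulVec w = 0 := by
      have hqk : q.natDegree < k := lt_of_lt_of_le hqlt hd0k
      have hsum : (Polynomial.aeval Z) q = ∑ b ∈ Finset.range k, q.coeff b • Z ^ b :=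
        Polynomial.aeval_eq_sum_range' hqk Z
      rw [hwdef, Matrix.mulVec_mulVec, hsum, Matrix.mul_sum, aux_sum_mulVec]
      refine Finset.sum_eq_zero fun b hb => ?_
      rw [Matrix.mul_smul, Matrix.smul_mulVec, hv b (Finset.mem_range.mp hb), smul_zero]
    -- left eigenvector
    have hdet : (Z - lam • 1).det = 0 := by
      rw [← Matrix.exists_mulVec_eq_zero_iff]
      refine ⟨w, hw0, ?_⟩
      rw [Matrix.sub_mulVec, Matrix.smul_mulVec, Matrix.one_mulVec, heig, sub_self]
    obtain ⟨u, hu0, huZ⟩ := Matrix.exists_vecMul_eq_zero_iff.mpr hdet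
    have huZ' : Matrix.vecMul u Z = lam • u := by
      funext j
      have h3 := congrFun huZ j
      simp only [Matrix.vecMul, dotProduct, Matrix.sub_apply, Matrix.smul_apply,
        Matrix.one_apply, smul_eq_mul, Pi.zero_apply, mul_sub, Finset.sum_sub_distrib,
        mul_ite, mul_one, mul_zero, Finset.sum_ite_eq', Finset.mem_univ, if_true,
        sub_eq_zero] at h3
      simp only [Matrix.vecMul, dotProduct, Pi.smul_apply, smul_eq_mul]
      rw [h3]; ring
    set Y : Matrix (Fin k) (Fin k) ℂ := Matrix.of fun i j => w i * u j with hY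
    have hY0 : Y = 0 := by
      apply h
      · ext i j
        have := congrFun hΨw i
        simp only [Matrix.mulVec, dotProduct, Pi.zero_apply] at this
        simp only [Matrix.mul_apply, hY, Matrix.of_apply, Matrix.zero_apply]
        calc ∑ l, Ψ i l * (w l * u j) = (∑ l, Ψ i l * w l) * u j := by
              rw [Finset.sum_mul]; exact Finset.sum_congr rfl fun l _ => (mul_assoc _ _ _).symm
          _ = 0 := by rw [this, zero_mul]
      · ext i j
        have h1 := congrFun heig i
        have h2 := congrFun huZ' j
        simp only [Matrix.mulVec, dotProduct, Pi.smul_apply, smul_eq_mul] at h1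
        simp only [Matrix.vecMul, dotProduct, Pi.smul_apply, smul_eq_mul] at h2
        simp only [Matrix.sub_apply, Matrix.mul_apply, hY, Matrix.of_apply, Matrix.zero_apply]
        have e1 : ∑ l, Z i l * (w l * u j) = (lam * w i) * u j := by
          rw [← h1, Finset.sum_mul]
          exact Finset.sum_congr rfl fun l _ => (mul_assoc _ _ _).symm
        have e2 : ∑ l, w i * u l * Z l j = w i * (lam * u j) := by
          rw [← h2, Finset.mul_sum]
          exact Finset.sum_congr rfl fun l _ => by ring
        rw [e1, e2]; ring
    obtain ⟨i, hi⟩ := Function.ne_iff.mp hw0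
    obtain ⟨j, hj⟩ := Function.ne_iff.mp hu0
    have := congrFun (congrFun hY0 i) j
    simp only [hY, Matrix.of_apply, Matrix.zero_apply] at this
    exact (mul_ne_zero (by simpa using hi) (by simpa using hj)) this
  · intro h X hΨX hcomm
    have hZX : Z * X = X * Z := by rwa [sub_eq_zero] at hcomm
    have hpow : ∀ a : ℕ, Z ^ a * X = X * Z ^ a := by
      intro a
      induction a with
      | zero => simp
      | succ a ih =>
        rw [pow_succ, mul_assoc, hZX, ← mul_assoc, ih, mul_assoc]
    ext i j
    have hcol := h (fun l => X l j) (by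
      intro a ha
      have h1 : Ψ * Z ^ a * X = 0 := by
        rw [Matrix.mul_assoc, hpow a, ← Matrix.mul_assoc, hΨX, Matrix.zero_mul]
      funext i'
      have := congrFun (congrFun h1 i') j
      simpa [Matrix.mul_apply, Matrix.mulVec, dotProduct] using this)
    simpa using congrFun hcol i
end

section
/- Let matrices Z_i ∈ M_{k_i}(ℂ), W_i ∈ M_{k_i,k_{i+1}}(ℂ), W̃_i ∈ M_{k_{i+1},k_i}(ℂ), Y_i, Ỹ_i satisfy (a) W̃_i Ỹ_i = 0, (b) Y_{i+1} W̃_i = 0, (c) Z_{i+1}W̃_i = W̃_i Z_i, (d) W̃_{i−1}W_{i−1} = W_i W̃_i (with W₀ = W̃₀ = W_L = W̃_L = 0), and suppose that for each i the GL(k_i,ℂ)-free condition holds: for every v ∈ ℂ^{k_i}, if Y_j W_j⋯W_{i−1}(z1−Z_i)⁻¹v = 0 for all j ≤ i and all z ∈ ℂ, then v = 0. Then W̃_i = 0 for all i. -/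
open Matrix Polynomial

/-- evaluation of the characteristic matrix -/
lemma charmatrix_eval {q : Type*} [Fintype q] [DecidableEq q]
    (A : Matrix q q ℂ) (z : ℂ) :
    (charmatrix A).map (eval z) = z • (1 : Matrix q q ℂ) - A := by
  ext i j
  by_cases h : i = j <;>
    simp [charmatrix_apply, Matrix.map_apply, Matrix.one_apply, Matrix.diagonal_apply, h,
      Matrix.sub_apply, Matrix.smul_apply]

lemma det_eval_charmatrix {q : Type*} [Fintype q] [DecidableEq q]
    (A : Matrix q q ℂ) (z : ℂ) :
    eval z A.charpoly = (z • (1 : Matrix q q ℂ) - A).det := by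
  have h := RingHom.map_det (evalRingHom z) (charmatrix A)
  rw [RingHom.mapMatrix_apply] at h
  rw [← charmatrix_eval A z, Matrix.charpoly, ← coe_evalRingHom, ← h, coe_evalRingHom]

/-- Key auxiliary lemma: if `M * N = 0` and `A * N = N * B`, then
`M * (z•1 - A)⁻¹ * N = 0` for every `z`. -/
lemma aux_resolvent {p q r : Type*} [Fintype p] [Fintype q] [Fintype r]
    [DecidableEq q] [DecidableEq r]
    (M : Matrix p q ℂ) (N : Matrix q r ℂ) (A : Matrix q q ℂ) (B : Matrix r r ℂ)
    (hMN : M * N = 0) (hint : A * N = N * B) :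
    ∀ z : ℂ, M * (z • (1 : Matrix q q ℂ) - A)⁻¹ * N = 0 := by
  -- the polynomial matrix
  set F : Matrix p r ℂ[X] :=
    M.map Polynomial.C * (charmatrix A).adjugate * N.map Polynomial.C with hF
  have hbad : {z : ℂ | IsRoot A.charpoly z ∨ IsRoot B.charpoly z}.Finite := by
    apply Set.Finite.union
    · exact Polynomial.finite_setOf_isRoot A.charpoly_monic.ne_zero
    · exact Polynomial.finite_setOf_isRoot B.charpoly_monic.ne_zero
  have hinfinite : {z : ℂ | ¬ (IsRoot A.charpoly z ∨ IsRoot B.charpoly z)}.Infinite := by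
    have := hbad.infinite_compl
    simpa [Set.compl_setOf] using this
  -- intertwining relation at each `z`
  have hintz : ∀ z : ℂ, (z • (1 : Matrix q q ℂ) - A) * N
      = N * (z • (1 : Matrix r r ℂ) - B) := by
    intro z
    rw [Matrix.sub_mul, Matrix.mul_sub, hint, Matrix.smul_mul, Matrix.mul_smul,
      Matrix.one_mul, Matrix.mul_one]
  -- evaluation of F
  have hFeval : ∀ z : ℂ, F.map (eval z)
      = M * (z • (1 : Matrix q q ℂ) - A).adjugate * N := by
    intro z
    rw [hF]
    rw [show (M.map Polynomial.C * (charmatrix A).adjugate * N.map Polynomial.C).map (eval z)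
        = (M.map Polynomial.C).map (eval z)
          * ((charmatrix A).adjugate).map (eval z) * (N.map Polynomial.C).map (eval z) by
      rw [← coe_evalRingHom, Matrix.map_mul, Matrix.map_mul]]
    have h1 : ((charmatrix A).adjugate).map (eval z)
        = (z • (1 : Matrix q q ℂ) - A).adjugate := by
      have h := RingHom.map_adjugate (evalRingHom z) (charmatrix A)
      rw [RingHom.mapMatrix_apply, RingHom.mapMatrix_apply] at h
      rw [← charmatrix_eval A z, ← coe_evalRingHom, ← h, coe_evalRingHom]
    have h2 : (M.map Polynomial.C).map (eval z) = M := by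
      ext i j; simp [Matrix.map_apply]
    have h3 : (N.map Polynomial.C).map (eval z) = N := by
      ext i j; simp [Matrix.map_apply]
    rw [h1, h2, h3]
  -- F vanishes at all good z
  have hgood : ∀ z : ℂ, ¬ (IsRoot A.charpoly z ∨ IsRoot B.charpoly z) →
      F.map (eval z) = 0 := by
    intro z hz
    push_neg at hz
    obtain ⟨hzA, hzB⟩ := hz
    have hdetA : IsUnit (z • (1 : Matrix q q ℂ) - A).det := by
      rw [← det_eval_charmatrix]; exact Ne.isUnit hzA
    have hdetB : IsUnit (z • (1 : Matrix r r ℂ) - B).det := by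
      rw [← det_eval_charmatrix]; exact Ne.isUnit hzB
    set A' := z • (1 : Matrix q q ℂ) - A with hA'
    set B' := z • (1 : Matrix r r ℂ) - B with hB'
    -- inverse intertwining
    have hinv : A'⁻¹ * N = N * B'⁻¹ := by
      have : A'⁻¹ * (A' * N) * B'⁻¹ = A'⁻¹ * (N * B') * B'⁻¹ := by rw [hintz z]
      rw [← Matrix.mul_assoc, ← Matrix.mul_assoc, Matrix.nonsing_inv_mul A' hdetA,
        Matrix.one_mul] at this
      rw [this, Matrix.mul_assoc, Matrix.mul_assoc, Matrix.mul_nonsing_inv B' hdetB,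
        Matrix.mul_one]
    have hadj : A'.adjugate = A'.det • A'⁻¹ := by
      have := Matrix.mul_adjugate A'
      calc A'.adjugate = (A'⁻¹ * A') * A'.adjugate := by
            rw [Matrix.nonsing_inv_mul A' hdetA, Matrix.one_mul]
        _ = A'⁻¹ * (A' * A'.adjugate) := by rw [Matrix.mul_assoc]
        _ = A'.det • A'⁻¹ := by rw [this, Matrix.mul_smul, Matrix.mul_one]
    rw [hFeval z, hadj]
    rw [Matrix.mul_smul, Matrix.smul_mul, Matrix.mul_assoc, hinv, ← Matrix.mul_assoc,
      hMN, Matrix.zero_mul, smul_zero]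
  -- so every entry of F is the zero polynomial
  have hF0 : F = 0 := by
    apply Matrix.ext
    intro a b
    rw [Matrix.zero_apply]
    apply Polynomial.eq_zero_of_infinite_isRoot
    apply hinfinite.mono
    intro z hz
    have := hgood z hz
    have : (F.map (eval z)) a b = 0 := by rw [this]; rfl
    simpa [Matrix.map_apply, IsRoot] using this
  -- conclude for every z
  intro z
  have hadj0 : M * (z • (1 : Matrix q q ℂ) - A).adjugate * N = 0 := by
    rw [← hFeval z, hF0]
    ext a b; simp [Matrix.map_apply]
  rw [Matrix.inv_def, Matrix.mul_smul, Matrix.smul_mul, hadj0, smul_zero]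

/-- The ordered product `W j * W (j+1) * ⋯ * W (i-1)` (equal to `1` when `i = j`,
and junk `0` when `j > i`). -/
noncomputable def Wprod (k : ℕ → ℕ)
    (W : ∀ i : ℕ, Matrix (Fin (k i)) (Fin (k (i + 1))) ℂ) (j : ℕ) :
    ∀ i : ℕ, Matrix (Fin (k j)) (Fin (k i)) ℂ
  | 0 => if h : j = 0 then by subst h; exact 1 else 0
  | (i + 1) => if h : j = i + 1 then by subst h; exact 1 else Wprod k W j i * W i

lemma Wprod_self (k : ℕ → ℕ) (W : ∀ i : ℕ, Matrix (Fin (k i)) (Fin (k (i + 1))) ℂ)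
    (j : ℕ) : HEq (Wprod k W j j) (1 : Matrix (Fin (k j)) (Fin (k j)) ℂ) := by
  cases j with
  | zero => rw [Wprod]; simp
  | succ m => rw [Wprod]; simp

lemma Wprod_self' (k : ℕ → ℕ) (W : ∀ i : ℕ, Matrix (Fin (k i)) (Fin (k (i + 1))) ℂ)
    (j : ℕ) : Wprod k W j j = (1 : Matrix (Fin (k j)) (Fin (k j)) ℂ) :=
  heq_iff_eq.mp (Wprod_self k W j)

lemma Wprod_succ (k : ℕ → ℕ) (W : ∀ i : ℕ, Matrix (Fin (k i)) (Fin (k (i + 1))) ℂ)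
    (j i : ℕ) (h : j ≠ i + 1) :
    Wprod k W j (i + 1) = Wprod k W j i * W i := by
  rw [Wprod]; simp [h]

/-- Vanishing theorem for the Lagrange multipliers `W̃ᵢ` in the half-ADHM quotient
construction: on the locus where the `GL(k₁,ℂ) × ⋯ × GL(k_L,ℂ)` action is free, the
stationarity equations force all multipliers `W̃ᵢ` (here `Wt i`, indexed from `0`) to
vanish.  Nodes are indexed `0, …, L-1` and links `0, …, L-2`. -/
theorem multiplier_vanishing (L : ℕ) (k n : ℕ → ℕ)
    (Z : ∀ i : ℕ, Matrix (Fin (k i)) (Fin (k i)) ℂ)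
    (Y : ∀ i : ℕ, Matrix (Fin (n i)) (Fin (k i)) ℂ)
    (Yt : ∀ i : ℕ, Matrix (Fin (k i)) (Fin (n (i + 1))) ℂ)
    (W : ∀ i : ℕ, Matrix (Fin (k i)) (Fin (k (i + 1))) ℂ)
    (Wt : ∀ i : ℕ, Matrix (Fin (k (i + 1))) (Fin (k i)) ℂ)
    (ha : ∀ i, i + 1 < L → Wt i * Yt i = 0)
    (hb : ∀ i, i + 1 < L → Y (i + 1) * Wt i = 0)
    (hc : ∀ i, i + 1 < L → Z (i + 1) * Wt i = Wt i * Z i)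
    (hd0 : 1 < L → W 0 * Wt 0 = 0)
    (hd : ∀ i, i + 2 < L → Wt i * W i = W (i + 1) * Wt (i + 1))
    (hdL : 1 < L → Wt (L - 2) * W (L - 2) = 0)
    (hfree : ∀ i, i < L → ∀ v : Fin (k i) → ℂ,
      (∀ j, j ≤ i → ∀ z : ℂ,
        (Y j * Wprod k W j i *
          (z • (1 : Matrix (Fin (k i)) (Fin (k i)) ℂ) - Z i)⁻¹).mulVec v = 0) →
      v = 0) :
    ∀ i, i + 1 < L → Wt i = 0 := by
  -- Step 1: `Y j * Wprod j i * (W i * Wt i) = 0` for `j ≤ i`, `i + 1 < L`.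
  have key : ∀ i : ℕ, i + 1 < L → ∀ j, j ≤ i →
      Y j * Wprod k W j i * (W i * Wt i) = 0 := by
    intro i
    induction i with
    | zero =>
      intro hL j hj
      interval_cases j
      rw [hd0 hL, Matrix.mul_zero]
    | succ m ih =>
      intro hL j hj
      have hWm : W (m + 1) * Wt (m + 1) = Wt m * W m := (hd m hL).symm
      rcases Nat.lt_or_ge j (m + 1) with hj' | hj'
      · have hjm : j ≤ m := Nat.lt_succ_iff.mp hj'
        have hne : j ≠ m + 1 := Nat.ne_of_lt hj'
        rw [hWm, Wprod_succ k W j m hne]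
        have hassoc : Y j * (Wprod k W j m * W m) * (Wt m * W m)
            = (Y j * Wprod k W j m * (W m * Wt m)) * W m := by
          simp only [Matrix.mul_assoc]
        rw [hassoc, ih (Nat.lt_of_succ_lt hL) j hjm, Matrix.zero_mul]
      · have hjeq : j = m + 1 := Nat.le_antisymm hj hj'
        subst hjeq
        rw [hWm, Wprod_self', Matrix.mul_one, ← Matrix.mul_assoc,
          hb m (Nat.lt_of_succ_lt hL), Matrix.zero_mul]
  -- Step 2: `Y j * Wprod j (i+1) * Wt i = 0` for `j ≤ i + 1`, `i + 1 < L`.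
  have star : ∀ i : ℕ, i + 1 < L → ∀ j, j ≤ i + 1 →
      Y j * Wprod k W j (i + 1) * Wt i = 0 := by
    intro i hL j hj
    rcases Nat.lt_or_ge j (i + 1) with hj' | hj'
    · have hne : j ≠ i + 1 := Nat.ne_of_lt hj'
      rw [Wprod_succ k W j i hne]
      have hassoc : Y j * (Wprod k W j i * W i) * Wt i
          = Y j * Wprod k W j i * (W i * Wt i) := by
        simp only [Matrix.mul_assoc]
      rw [hassoc, key i hL j (Nat.lt_succ_iff.mp hj')]
    · have hjeq : j = i + 1 := Nat.le_antisymm hj hj'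
      subst hjeq
      rw [Wprod_self', Matrix.mul_one, hb i hL]
  -- Step 3: use the resolvent lemma and freeness at node `i + 1`.
  intro i hL
  have hres : ∀ j, j ≤ i + 1 → ∀ z : ℂ,
      Y j * Wprod k W j (i + 1) *
        (z • (1 : Matrix (Fin (k (i + 1))) (Fin (k (i + 1)))  ℂ) - Z (i + 1))⁻¹ * Wt i = 0 := by
    intro j hj z
    have := aux_resolvent (Y j * Wprod k W j (i + 1)) (Wt i) (Z (i + 1)) (Z i)
      (star i hL j hj) (hc i hL) z
    exact this
  have hcol : ∀ c : Fin (k i), (fun r => Wt i r c) = 0 := by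
    intro c
    apply hfree (i + 1) hL
    intro j hj z
    have h1 : (fun r => Wt i r c) = (Wt i).mulVec (Pi.single c 1) := by
      funext r
      simp [Matrix.mulVec_single]
    rw [h1, Matrix.mulVec_mulVec, hres j hj z, Matrix.zero_mulVec]
  ext r c
  have := congrFun (hcol c) r
  simpa using this
end

section
/- Let 𝔇(z) be an n×n matrix of polynomials with det 𝔇(z) a monic polynomial of degree k, let 𝔍(z) be an n×k polynomial matrix, Ψ an n×k constant matrix, Z a k×k constant matrix, and P^𝔇 (n×n), P^𝔍 (k×n) constant matrices satisfying 𝔇(z)Ψ = 𝔍(z)(z·1_k − Z) and 1_n = 𝔇(z)P^𝔇 + 𝔍(z)P^𝔍 for all z. Then det 𝔇(z) = det(z·1_k − Z), i.e. det 𝔇 equals the characteristic polynomial of Z. -/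
open Matrix Polynomial

private lemma matPolyEq {a b : ℕ} (A B : Matrix (Fin a) (Fin b) (Polynomial ℂ))
    (h : ∀ z : ℂ, A.map (Polynomial.eval z) = B.map (Polynomial.eval z)) : A = B :=
  Matrix.ext fun i j => Polynomial.funext fun z => congrFun (congrFun (h z) i) j

private lemma mapEval_mul {a b c : ℕ} (A : Matrix (Fin a) (Fin b) (Polynomial ℂ))
    (B : Matrix (Fin b) (Fin c) (Polynomial ℂ)) (z : ℂ) :
    (A * B).map (Polynomial.eval z) =
      A.map (Polynomial.eval z) * B.map (Polynomial.eval z) := by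
  rw [← Polynomial.coe_evalRingHom]; exact Matrix.map_mul

private lemma mapEval_add {a b : ℕ} (A B : Matrix (Fin a) (Fin b) (Polynomial ℂ)) (z : ℂ) :
    (A + B).map (Polynomial.eval z) =
      A.map (Polynomial.eval z) + B.map (Polynomial.eval z) := by
  ext i j; simp

private lemma mapEval_C {a b : ℕ} (A : Matrix (Fin a) (Fin b) ℂ) (z : ℂ) :
    (A.map Polynomial.C).map (Polynomial.eval z) = A := by
  ext i j; simp

private lemma mapEval_one {a : ℕ} (z : ℂ) :
    (1 : Matrix (Fin a) (Fin a) (Polynomial ℂ)).map (Polynomial.eval z) = 1 := by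
  ext i j; by_cases h : i = j <;> simp [Matrix.one_apply, h]

/-- Key determinant identity of the half-ADHM construction: if
`𝔇(z) Ψ = 𝔍(z)(z·1 − Z)` and `1 = 𝔇(z) P^𝔇 + 𝔍(z) P^𝔍` for all `z`, and `det 𝔇`
is monic of degree `k`, then `det 𝔇(z)` equals the characteristic polynomial of `Z`. -/
theorem det_moduli_matrix_eq_charpoly (n k : ℕ)
    (D : Matrix (Fin n) (Fin n) (Polynomial ℂ))
    (J : Matrix (Fin n) (Fin k) (Polynomial ℂ))
    (Ψ : Matrix (Fin n) (Fin k) ℂ) (Z : Matrix (Fin k) (Fin k) ℂ)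
    (PD : Matrix (Fin n) (Fin n) ℂ) (PJ : Matrix (Fin k) (Fin n) ℂ)
    (hmonic : D.det.Monic) (hdeg : D.det.degree = (k : WithBot ℕ))
    (h1 : ∀ z : ℂ, D.map (Polynomial.eval z) * Ψ =
      J.map (Polynomial.eval z) * (z • (1 : Matrix (Fin k) (Fin k) ℂ) - Z))
    (h2 : ∀ z : ℂ, D.map (Polynomial.eval z) * PD + J.map (Polynomial.eval z) * PJ = 1) :
    ∀ z : ℂ, (D.map (Polynomial.eval z)).det =
      (z • (1 : Matrix (Fin k) (Fin k) ℂ) - Z).det := by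
  classical
  -- the "characteristic matrix" X•1 - Z
  set cm : Matrix (Fin k) (Fin k) (Polynomial ℂ) :=
    (Polynomial.X : Polynomial ℂ) • (1 : Matrix (Fin k) (Fin k) (Polynomial ℂ))
      - Z.map Polynomial.C with hcm
  have hcm_charmatrix : cm = Matrix.charmatrix Z := by
    ext i j
    by_cases hij : i = j
    · subst hij
      simp [hcm, Matrix.charmatrix_apply_eq, Matrix.one_apply, Matrix.sub_apply]
    · simp [hcm, Matrix.charmatrix_apply_ne _ _ _ hij, Matrix.one_apply, hij,
        Matrix.sub_apply]
  have hcm_eval : ∀ w : ℂ, cm.map (Polynomial.eval w) =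
      w • (1 : Matrix (Fin k) (Fin k) ℂ) - Z := by
    intro w
    ext i j
    by_cases hij : i = j <;>
      simp [hcm, Matrix.one_apply, hij, Matrix.map_apply, Matrix.sub_apply,
        Matrix.smul_apply, smul_eq_mul]
  -- block identities
  have hb11 : D * PD.map Polynomial.C + J * PJ.map Polynomial.C = 1 := by
    apply matPolyEq
    intro z
    rw [mapEval_add, mapEval_mul, mapEval_mul, mapEval_C, mapEval_C, mapEval_one]
    exact h2 z
  have hbΨ : D * Ψ.map Polynomial.C = J * cm := by
    apply matPolyEq
    intro z
    rw [mapEval_mul, mapEval_mul, mapEval_C, hcm_eval]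
    exact h1 z
  have hb12 : D * -Ψ.map Polynomial.C + J * cm = 0 := by
    rw [Matrix.mul_neg, hbΨ]; simp
  have hb21 : (0 : Matrix (Fin k) (Fin n) (Polynomial ℂ)) * PD.map Polynomial.C
      + (1 : Matrix (Fin k) (Fin k) (Polynomial ℂ)) * PJ.map Polynomial.C
      = PJ.map Polynomial.C := by
    rw [Matrix.zero_mul, Matrix.one_mul, zero_add]
  have hb22 : (0 : Matrix (Fin k) (Fin n) (Polynomial ℂ)) * -Ψ.map Polynomial.C
      + (1 : Matrix (Fin k) (Fin k) (Polynomial ℂ)) * cm = cm := by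
    rw [Matrix.zero_mul, Matrix.one_mul, zero_add]
  have key : Matrix.fromBlocks D J 0 1 *
      Matrix.fromBlocks (PD.map Polynomial.C) (-(Ψ.map Polynomial.C)) (PJ.map Polynomial.C) cm
      = Matrix.fromBlocks 1 0 (PJ.map Polynomial.C) cm := by
    rw [Matrix.fromBlocks_multiply, hb11, hb12, hb21, hb22]
  -- determinants
  have hdetkey := congrArg Matrix.det key
  rw [Matrix.det_mul, Matrix.det_fromBlocks_zero₂₁, Matrix.det_fromBlocks_zero₁₂,
    Matrix.det_one, Matrix.det_one, mul_one, one_mul] at hdetkey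
  -- hdetkey : D.det * N.det = cm.det
  have hcp : cm.det = Z.charpoly := by rw [hcm_charmatrix]; rfl
  set q : Polynomial ℂ := (Matrix.fromBlocks (PD.map Polynomial.C)
    (-(Ψ.map Polynomial.C)) (PJ.map Polynomial.C) cm).det with hq
  have hpq : D.det * q = Z.charpoly := by rw [hdetkey, hcp]
  have hcp_monic : Z.charpoly.Monic := Z.charpoly_monic
  have hcp_deg : Z.charpoly.degree = (k : WithBot ℕ) := by
    rw [Z.charpoly_degree_eq_dim, Fintype.card_fin]
  -- degree of q is 0
  have hdegq : q.degree = 0 := by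
    have h : (D.det * q).degree = D.det.degree + q.degree := Polynomial.degree_mul
    rw [hpq, hcp_deg, hdeg] at h
    have : (k : WithBot ℕ) + 0 = (k : WithBot ℕ) + q.degree := by
      rw [add_zero]; exact h
    exact (WithBot.add_left_cancel (by exact_mod_cast WithBot.coe_ne_bot) this).symm
  have hlcq : q.leadingCoeff = 1 := by
    have h := congrArg Polynomial.leadingCoeff hpq
    rw [Polynomial.leadingCoeff_mul, hmonic.leadingCoeff, one_mul, hcp_monic.leadingCoeff] at h
    exact h
  have hq1 : q = 1 := by
    have h := Polynomial.eq_C_of_degree_le_zero (le_of_eq hdegq)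
    have hnd : q.natDegree = 0 := Polynomial.natDegree_eq_zero_iff_degree_le_zero.mpr (le_of_eq hdegq)
    rw [h]
    rw [Polynomial.leadingCoeff, hnd] at hlcq
    rw [hlcq, Polynomial.C_1]
  have hDdet : D.det = Z.charpoly := by
    rw [← hpq, hq1, mul_one]
  -- evaluate
  intro z
  have e1 : (D.map (Polynomial.eval z)).det = Polynomial.eval z D.det := by
    rw [← Polynomial.coe_evalRingHom]
    exact ((Polynomial.evalRingHom z).map_det D).symm
  rw [e1, hDdet, Matrix.charpoly, ← Polynomial.coe_evalRingHom,
    (Polynomial.evalRingHom z).map_det, RingHom.mapMatrix_apply,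
    Polynomial.coe_evalRingHom, ← hcm_charmatrix, hcm_eval]
end

section
/- Let φ : ℂ → M_{n,m}(ℂ) be a matrix-valued rational function vanishing at infinity, all of whose entries have finitely many poles. Suppose φ(z) = 𝔇₁(z)⁻¹𝔇̃₁(z) = 𝔇₂(z)⁻¹𝔇̃₂(z), where 𝔇_i are n×n polynomial matrices with det 𝔇_i of degree k_i, 𝔇̃_i are n×m polynomial matrices, 𝔇_i(z)⁻¹𝔇̃_i(z) = O(z⁻¹) as z → ∞, and each full matrix ξ_i(z) = (𝔇_i(z), 𝔇̃_i(z)) has rank n for every z ∈ ℂ. Then k₁ = k₂ and there exists V(z) ∈ GL(n,ℂ[z]) with (𝔇₂, 𝔇̃₂) = V·(𝔇₁, 𝔇̃₁). -/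
open Matrix Polynomial

/-!
Write `ξᵢ = (𝔇ᵢ, 𝔇̃ᵢ)`. Since `ξᵢ(z)` has full rank at every `z ∈ ℂ`, its maximal minors have no
common zero, hence generate the unit ideal of `ℂ[z]`, and adjugates of these minors assemble into
a polynomial right inverse `ηᵢ` of `ξᵢ`. Clearing denominators in `𝔇₁⁻¹𝔇̃₁ = 𝔇₂⁻¹𝔇̃₂` gives the
polynomial identity `𝔇₂ adj(𝔇₁) ξ₁ = det 𝔇₁ · ξ₂`; multiplying by `η₁ ξ₁` and cancelling `det 𝔇₁`
yields `ξ₂ = V ξ₁` with `V = ξ₂ η₁`. Then `V (ξ₁ η₂) = ξ₂ η₂ = 1`, so `det V` is a unit, and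
`det 𝔇₂ = det V · det 𝔇₁` forces `k₁ = k₂`.
-/

theorem Polynomial.exists_forall_eval_eq_zero_of_ne_top {K : Type*} [Field K] [IsAlgClosed K]
    {I : Ideal K[X]} (hI : I ≠ ⊤) : ∃ z, ∀ f ∈ I, f.eval z = 0 := by
  obtain ⟨a, rfl⟩ := (IsPrincipalIdealRing.principal I).principal
  have ha : a.degree ≠ 0 := fun h =>
    hI (Ideal.span_singleton_eq_top.2 (isUnit_iff_degree_eq_zero.2 h))
  obtain ⟨z, hz⟩ := IsAlgClosed.exists_root a ha
  refine ⟨z, fun f hf => ?_⟩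
  obtain ⟨c, rfl⟩ := Ideal.mem_span_singleton'.1 hf
  rw [eval_mul, hz.eq_zero, mul_zero]

namespace Matrix

variable {R K : Type*} [CommRing R] [Field K] {ι ι' κ : Type*}

theorem det_mul_mem_span_det_submatrix [Fintype ι] [DecidableEq ι] [Fintype κ] (M : Matrix ι κ R)
    (N : Matrix κ ι R) :
    (M * N).det ∈ Ideal.span (Set.range fun g : ι → κ => (M.submatrix id g).det) := by
  have hrows : Nᵀ * Mᵀ = fun i => ∑ k, N k i • Mᵀ k := by
    ext i j
    simp [mul_apply]
  rw [← det_transpose, transpose_mul, hrows]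
  change detRowAlternating.toMultilinearMap (fun i => ∑ k, N k i • Mᵀ k) ∈ _
  rw [MultilinearMap.map_sum]
  refine Ideal.sum_mem _ fun g _ => ?_
  rw [MultilinearMap.map_smul_univ, smul_eq_mul]
  exact Ideal.mul_mem_left _ _ (Ideal.subset_span ⟨g, (det_transpose _).symm⟩)

theorem exists_mul_eq_one_of_span_det_submatrix_eq_top [Fintype ι] [DecidableEq ι] [Fintype κ]
    (ξ : Matrix ι κ R)
    (h : Ideal.span (Set.range fun g : ι → κ => (ξ.submatrix id g).det) = ⊤) :
    ∃ η : Matrix κ ι R, ξ * η = 1 := by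
  classical
  suffices ∀ c ∈ Ideal.span (Set.range fun g : ι → κ => (ξ.submatrix id g).det),
      ∃ η : Matrix κ ι R, ξ * η = c • 1 by
    simpa using this 1 (h ▸ Submodule.mem_top)
  intro c hc
  induction hc using Submodule.span_induction with
  | mem _ hc =>
    obtain ⟨g, rfl⟩ := hc
    refine ⟨(1 : Matrix κ κ R).submatrix (Equiv.refl κ) g * (ξ.submatrix id g).adjugate, ?_⟩
    rw [← Matrix.mul_assoc, mul_submatrix_one, Equiv.refl_symm, Equiv.coe_refl,
      Function.id_comp, mul_adjugate]
  | zero => exact ⟨0, by simp⟩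
  | add a b _ _ ha hb =>
    obtain ⟨η, hη⟩ := ha
    obtain ⟨η', hη'⟩ := hb
    exact ⟨η + η', by rw [Matrix.mul_add, hη, hη', add_smul]⟩
  | smul a b _ hb =>
    obtain ⟨η, hη⟩ := hb
    exact ⟨a • η, by rw [Matrix.mul_smul, hη, smul_smul, smul_eq_mul]⟩

theorem eq_mul_mul_of_mul_eq_smul [IsDomain R] [Fintype ι] [DecidableEq ι] [Fintype κ]
    {ξ₁ : Matrix ι κ R} {ξ₂ : Matrix ι' κ R} {η : Matrix κ ι R} {W : Matrix ι' ι R} {c : R}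
    (hc : c ≠ 0) (hη : ξ₁ * η = 1) (hW : W * ξ₁ = c • ξ₂) : ξ₂ = ξ₂ * η * ξ₁ := by
  have h : c • ξ₂ = c • (ξ₂ * η * ξ₁) := by
    rw [← Matrix.smul_mul, ← Matrix.smul_mul, ← hW, Matrix.mul_assoc W, hη, Matrix.mul_one]
  exact Matrix.ext fun i j => mul_left_cancel₀ hc (congrFun₂ h i j)

theorem smul_fromCols {S α : Type*} [SMul S α] (c : S) (A₁ : Matrix ι κ α) (A₂ : Matrix ι ι' α) :
    c • fromCols A₁ A₂ = fromCols (c • A₁) (c • A₂) := by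
  ext i (j | j) <;> rfl

theorem exists_mul_eq_one_of_rank_eq_card [Fintype ι] [DecidableEq ι] [Fintype κ]
    (A : Matrix ι κ K) (h : A.rank = Fintype.card ι) : ∃ B : Matrix κ ι K, A * B = 1 := by
  classical
  have hsurj : LinearMap.range A.mulVecLin = ⊤ :=
    Submodule.eq_top_of_finrank_eq (by rw [← rank, h, Module.finrank_fintype_fun_eq_card])
  obtain ⟨g, hg⟩ := A.mulVecLin.exists_rightInverse_of_surjective hsurj
  refine ⟨LinearMap.toMatrix' g, toLin'.injective ?_⟩
  rw [toLin'_mul, toLin'_toMatrix', toLin'_apply', toLin'_one, hg]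

theorem exists_det_submatrix_ne_zero_of_rank_eq_card [Fintype ι] [DecidableEq ι] [Fintype κ]
    (A : Matrix ι κ K) (h : A.rank = Fintype.card ι) :
    ∃ g : ι → κ, (A.submatrix id g).det ≠ 0 := by
  obtain ⟨B, hB⟩ := exists_mul_eq_one_of_rank_eq_card A h
  by_contra! hzero
  have h1 := det_mul_mem_span_det_submatrix A B
  rw [hB, det_one, Ideal.span_eq_bot.2 (by simpa using hzero)] at h1
  exact one_ne_zero h1

theorem map_eval_det [Fintype ι] [DecidableEq ι] (M : Matrix ι ι K[X]) (z : K) :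
    (M.map (eval z)).det = M.det.eval z :=
  ((evalRingHom z).map_det M).symm

theorem map_eval_adjugate [Fintype ι] [DecidableEq ι] (M : Matrix ι ι K[X]) (z : K) :
    M.adjugate.map (eval z) = (M.map (eval z)).adjugate :=
  (evalRingHom z).map_adjugate M

theorem map_eval_mul [Fintype ι] (M : Matrix ι' ι K[X]) (N : Matrix ι κ K[X]) (z : K) :
    (M * N).map (eval z) = M.map (eval z) * N.map (eval z) :=
  Matrix.map_mul (f := evalRingHom z)

theorem exists_mul_eq_one_of_forall_rank_map_eval [IsAlgClosed K] [Fintype ι] [DecidableEq ι]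
    [Fintype κ] (ξ : Matrix ι κ K[X]) (h : ∀ z, (ξ.map (eval z)).rank = Fintype.card ι) :
    ∃ η : Matrix κ ι K[X], ξ * η = 1 := by
  refine exists_mul_eq_one_of_span_det_submatrix_eq_top ξ (by_contra fun hne => ?_)
  obtain ⟨z, hz⟩ := Polynomial.exists_forall_eval_eq_zero_of_ne_top hne
  obtain ⟨g, hg⟩ := exists_det_submatrix_ne_zero_of_rank_eq_card _ (h z)
  rw [submatrix_map, map_eval_det] at hg
  exact hg (hz _ (Ideal.subset_span ⟨g, rfl⟩))

theorem eq_of_forall_eval_ne_zero_map_eval_eq [Infinite K] {f : K[X]} (hf : f ≠ 0)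
    {P Q : Matrix ι κ K[X]} (h : ∀ z, f.eval z ≠ 0 → P.map (eval z) = Q.map (eval z)) :
    P = Q := by
  refine Matrix.ext fun i j => eq_of_infinite_eval_eq _ _ ?_
  exact (finite_setOfPred_isRoot hf).infinite_compl.mono fun z hz => congrFun₂ (h z hz) i j

theorem mul_adjugate_mul_fromCols_eq_det_smul [Infinite K] [Fintype ι] [DecidableEq ι]
    [Fintype κ] {D₁ D₂ : Matrix ι ι K[X]} {Dt₁ Dt₂ : Matrix ι κ K[X]} (hD₁ : D₁.det ≠ 0)
    (hD₂ : D₂.det ≠ 0)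
    (h : ∀ z, IsUnit (D₁.map (eval z)).det → IsUnit (D₂.map (eval z)).det →
      (D₁.map (eval z))⁻¹ * Dt₁.map (eval z) = (D₂.map (eval z))⁻¹ * Dt₂.map (eval z)) :
    D₂ * D₁.adjugate * fromCols D₁ Dt₁ = D₁.det • fromCols D₂ Dt₂ := by
  have hDt : D₂ * D₁.adjugate * Dt₁ = D₁.det • Dt₂ := by
    refine eq_of_forall_eval_ne_zero_map_eval_eq (mul_ne_zero hD₁ hD₂) fun z hz => ?_
    rw [eval_mul, mul_ne_zero_iff, ← map_eval_det, ← map_eval_det] at hz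
    set A₁ := D₁.map (eval z)
    set A₂ := D₂.map (eval z)
    have hu₁ : IsUnit A₁.det := hz.1.isUnit
    have hu₂ : IsUnit A₂.det := hz.2.isUnit
    calc (D₂ * D₁.adjugate * Dt₁).map (eval z)
        = A₂ * (A₁.adjugate * A₁) * (A₁⁻¹ * Dt₁.map (eval z)) := by
          simp only [map_eval_mul, map_eval_adjugate, Matrix.mul_assoc,
            mul_nonsing_inv_cancel_left _ _ hu₁]
          rfl
      _ = A₁.det • (A₂ * A₂⁻¹ * Dt₂.map (eval z)) := by
          rw [adjugate_mul, h z hu₁ hu₂, Matrix.mul_smul, Matrix.mul_one, Matrix.smul_mul,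
            Matrix.mul_assoc]
      _ = (D₁.det • Dt₂).map (eval z) := by
          rw [mul_nonsing_inv _ hu₂, Matrix.one_mul, map_eval_det]
          ext i j
          simp
  rw [mul_fromCols, Matrix.mul_assoc, adjugate_mul, Matrix.mul_smul, Matrix.mul_one, hDt,
    smul_fromCols]

end Matrix

theorem semilocal_data_unique_general (n m k₁ k₂ : ℕ)
    (φ : ℂ → Matrix (Fin n) (Fin m) ℂ)
    (D₁ D₂ : Matrix (Fin n) (Fin n) (Polynomial ℂ))
    (Dt₁ Dt₂ : Matrix (Fin n) (Fin m) (Polynomial ℂ))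
    (hdeg₁ : D₁.det.degree = (k₁ : WithBot ℕ))
    (hdeg₂ : D₂.det.degree = (k₂ : WithBot ℕ))
    (hφ₁ : ∀ z : ℂ, IsUnit (D₁.map (Polynomial.eval z)).det →
      φ z = (D₁.map (Polynomial.eval z))⁻¹ * Dt₁.map (Polynomial.eval z))
    (hφ₂ : ∀ z : ℂ, IsUnit (D₂.map (Polynomial.eval z)).det →
      φ z = (D₂.map (Polynomial.eval z))⁻¹ * Dt₂.map (Polynomial.eval z))
    (hrank₁ : ∀ z : ℂ,
      (Matrix.fromCols (D₁.map (Polynomial.eval z))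
        (Dt₁.map (Polynomial.eval z))).rank = n)
    (hrank₂ : ∀ z : ℂ,
      (Matrix.fromCols (D₂.map (Polynomial.eval z))
        (Dt₂.map (Polynomial.eval z))).rank = n) :
    k₁ = k₂ ∧ ∃ V : Matrix (Fin n) (Fin n) (Polynomial ℂ),
      IsUnit V.det ∧ D₂ = V * D₁ ∧ Dt₂ = V * Dt₁ := by
  have hdet₁ : D₁.det ≠ 0 := ne_zero_of_coe_le_degree hdeg₁.ge
  have hdet₂ : D₂.det ≠ 0 := ne_zero_of_coe_le_degree hdeg₂.ge
  obtain ⟨η₁, hη₁⟩ := exists_mul_eq_one_of_forall_rank_map_eval (fromCols D₁ Dt₁) fun z => by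
    rw [fromCols_map, Fintype.card_fin, hrank₁]
  obtain ⟨η₂, hη₂⟩ := exists_mul_eq_one_of_forall_rank_map_eval (fromCols D₂ Dt₂) fun z => by
    rw [fromCols_map, Fintype.card_fin, hrank₂]
  have hW := mul_adjugate_mul_fromCols_eq_det_smul hdet₁ hdet₂ fun z h₁ h₂ =>
    (hφ₁ z h₁).symm.trans (hφ₂ z h₂)
  set V := fromCols D₂ Dt₂ * η₁
  have hξ : fromCols D₂ Dt₂ = V * fromCols D₁ Dt₁ := eq_mul_mul_of_mul_eq_smul hdet₁ hη₁ hW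
  have hV : IsUnit V.det := isUnit_det_of_right_inverse (B := fromCols D₁ Dt₁ * η₂) <| by
    rw [← Matrix.mul_assoc, ← hξ, hη₂]
  obtain ⟨hD, hDt⟩ := fromCols_inj (hξ.trans (mul_fromCols V D₁ Dt₁))
  refine ⟨?_, V, hV, hD, hDt⟩
  have hassoc : Associated D₁.det D₂.det := ⟨hV.unit, by rw [hD, det_mul, mul_comm]; rfl⟩
  exact_mod_cast hdeg₁.symm.trans ((degree_eq_degree_of_associated hassoc).trans hdeg₂)

/-- Uniqueness of the semi-local moduli-matrix data representing a given
Grassmannian sigma-model instanton: if `φ(z) = 𝔇₁⁻¹𝔇̃₁ = 𝔇₂⁻¹𝔇̃₂` with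
`𝔇ᵢ⁻¹𝔇̃ᵢ = O(z⁻¹)` at infinity and the full matrices `ξᵢ(z) = (𝔇ᵢ(z), 𝔇̃ᵢ(z))` of
rank `n` everywhere, then `k₁ = k₂` and the two data are related by an element of
`GL(n, ℂ[z])`. -/
theorem semilocal_data_unique (n m k₁ k₂ : ℕ)
    (φ : ℂ → Matrix (Fin n) (Fin m) ℂ)
    (D₁ D₂ : Matrix (Fin n) (Fin n) (Polynomial ℂ))
    (Dt₁ Dt₂ : Matrix (Fin n) (Fin m) (Polynomial ℂ))
    (hdeg₁ : D₁.det.degree = (k₁ : WithBot ℕ))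
    (hdeg₂ : D₂.det.degree = (k₂ : WithBot ℕ))
    (hφ₁ : ∀ z : ℂ, IsUnit (D₁.map (Polynomial.eval z)).det →
      φ z = (D₁.map (Polynomial.eval z))⁻¹ * Dt₁.map (Polynomial.eval z))
    (hφ₂ : ∀ z : ℂ, IsUnit (D₂.map (Polynomial.eval z)).det →
      φ z = (D₂.map (Polynomial.eval z))⁻¹ * Dt₂.map (Polynomial.eval z))
    (hO₁ : ∀ a b, (fun z : ℂ =>
        ((D₁.map (Polynomial.eval z))⁻¹ * Dt₁.map (Polynomial.eval z)) a b)
      =O[Bornology.cobounded ℂ] fun z => z⁻¹)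
    (hO₂ : ∀ a b, (fun z : ℂ =>
        ((D₂.map (Polynomial.eval z))⁻¹ * Dt₂.map (Polynomial.eval z)) a b)
      =O[Bornology.cobounded ℂ] fun z => z⁻¹)
    (hrank₁ : ∀ z : ℂ,
      (Matrix.fromCols (D₁.map (Polynomial.eval z))
        (Dt₁.map (Polynomial.eval z))).rank = n)
    (hrank₂ : ∀ z : ℂ,
      (Matrix.fromCols (D₂.map (Polynomial.eval z))
        (Dt₂.map (Polynomial.eval z))).rank = n) :
    k₁ = k₂ ∧ ∃ V : Matrix (Fin n) (Fin n) (Polynomial ℂ),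
      IsUnit V.det ∧ D₂ = V * D₁ ∧ Dt₂ = V * Dt₁ :=
  semilocal_data_unique_general n m k₁ k₂ φ D₁ D₂ Dt₁ Dt₂ hdeg₁ hdeg₂ hφ₁ hφ₂ hrank₁ hrank₂
end
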